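/- Let s : P^2 × P^1 → P^5 be the Segre embedding with image X. Then the only planes (2-dimensional linear subspaces of P^5) contained in X are the fibers s(P^2 × {a}) for points a ∈ P^1. -/

import Mathlib

open Projectivization Set

/-- `ℙ^(n-1)`-style projective space of the vector space `Fin n → k`. -/
abbrev Pk (k : Type*) [Field k] (n : ℕ) := Projectivization k (Fin n → k)

/-- Segre map on vectors. -/
def segV (k : Type*) [Field k] (x : Fin 3 → k) (y : Fin 2 → k) : Fin 6 → k :=
  fun i => x ⟨i.1 / 2, by have := i.2; omega⟩ * y ⟨i.1 % 2, by omega⟩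

theorem segV_ne_zero (k : Type*) [Field k] {x : Fin 3 → k} {y : Fin 2 → k}
    (hx : x ≠ 0) (hy : y ≠ 0) : segV k x y ≠ 0 := by
  obtain ⟨a, ha⟩ := Function.ne_iff.mp hx
  obtain ⟨b, hb⟩ := Function.ne_iff.mp hy
  intro h
  have ha2 := a.2
  have hb2 := b.2
  have h6 : 2 * a.1 + b.1 < 6 := by omega
  have hkey := congrFun h ⟨2 * a.1 + b.1, h6⟩
  simp only [segV, Pi.zero_apply] at hkey
  have e1 : (⟨(2 * a.1 + b.1) / 2, by omega⟩ : Fin 3) = a := Fin.ext (by simp; omega)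
  have e2 : (⟨(2 * a.1 + b.1) % 2, by omega⟩ : Fin 2) = b := Fin.ext (by simp; omega)
  rw [e1, e2] at hkey
  exact (mul_ne_zero ha hb) hkey

/-- The Segre embedding `s : ℙ² × ℙ¹ → ℙ⁵`. -/
noncomputable def segre (k : Type*) [Field k] (p : Pk k 3) (q : Pk k 2) : Pk k 6 :=
  Projectivization.mk k (segV k p.rep q.rep) (segV_ne_zero k p.rep_nonzero q.rep_nonzero)

/-- The Segre threefold `X = s(ℙ² × ℙ¹) ⊆ ℙ⁵`. -/
def SegreX (k : Type*) [Field k] : Set (Pk k 6) := {z | ∃ p q, z = segre k p q}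

/-- The set of points of projective space lying in a linear subspace `W`. -/
def projLin {k : Type*} [Field k] {n : ℕ} (W : Submodule k (Fin n → k)) : Set (Pk k n) :=
  {p | p.rep ∈ W}

/-- The plane `F₁ = s(ℙ² × {a})` of the ruling. -/
def F1set (k : Type*) [Field k] (a : Pk k 2) : Set (Pk k 6) := {z | ∃ p, z = segre k p a}

/-!
Every vector of `W` is a rank-one `3 × 2` matrix `x yᵀ`. Fix a nonzero one `x₀ y₀ᵀ ∈ W`. For any
other `x yᵀ ∈ W` the sum `x₀ y₀ᵀ + x yᵀ` has rank at most one, while its `2 × 2` minors factor as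
`(x₀ ∧ x) (y₀ ∧ y)`; so `y ∥ y₀` or `x ∥ x₀`. Thus `W` lies in the union of the 3-space `{x y₀ᵀ}`
and the 2-space `{x₀ yᵀ}`, hence in one of them, and by dimension `W = {x y₀ᵀ}`, the fiber
over `[y₀]`.
-/

section Segre

variable {k : Type*} [Field k]

lemma mem_projLin_mk {n : ℕ} {W : Submodule k (Fin n → k)} {v : Fin n → k} (hv : v ≠ 0) :
    Projectivization.mk k v hv ∈ projLin W ↔ v ∈ W := by
  obtain ⟨a, ha⟩ := exists_smul_eq_mk_rep k v hv
  rw [projLin, mem_ofPred_eq, ← ha, Submodule.smul_mem_iff']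

lemma exists_eq_smul_of_mul_eq_mul {ι : Type*} {u v : ι → k} (hu : u ≠ 0)
    (h : ∀ i j, u i * v j = u j * v i) : ∃ c : k, v = c • u := by
  obtain ⟨i₀, hi₀⟩ := Function.ne_iff.mp hu
  refine ⟨v i₀ / u i₀, funext fun i ↦ ?_⟩
  rw [Pi.smul_apply, smul_eq_mul, div_mul_eq_mul_div, eq_div_iff hi₀]
  linear_combination h i₀ i

def segL : (Fin 3 → k) →ₗ[k] (Fin 2 → k) →ₗ[k] (Fin 6 → k) :=
  LinearMap.mk₂ k (segV k)
    (fun x x' y ↦ by funext i; simp [segV, add_mul])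
    (fun c x y ↦ by funext i; simp [segV, mul_assoc])
    (fun x y y' ↦ by funext i; simp [segV, mul_add])
    (fun c x y ↦ by funext i; simp [segV, mul_left_comm])

@[simp]
lemma segL_apply (x : Fin 3 → k) (y : Fin 2 → k) : segL x y = segV k x y := rfl

lemma segre_mk {x : Fin 3 → k} {y : Fin 2 → k} (hx : x ≠ 0) (hy : y ≠ 0) :
    segre k (Projectivization.mk k x hx) (Projectivization.mk k y hy) =
      Projectivization.mk k (segV k x y) (segV_ne_zero k hx hy) := by
  obtain ⟨a, ha⟩ := exists_smul_eq_mk_rep k x hx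
  obtain ⟨b, hb⟩ := exists_smul_eq_mk_rep k y hy
  rw [segre, mk_eq_mk_iff', ← ha, ← hb]
  exact ⟨b * a, by simp [← segL_apply, smul_smul, Units.smul_def]⟩

lemma projLin_range_segL_flip {y : Fin 2 → k} (hy : y ≠ 0) :
    projLin (LinearMap.range (segL.flip y)) = F1set k (Projectivization.mk k y hy) := by
  ext z
  induction z using Projectivization.ind with
  | h v hv =>
    rw [mem_projLin_mk]
    constructor
    · rintro ⟨x, rfl⟩
      have hx : x ≠ 0 := by rintro rfl; simp at hv
      exact ⟨Projectivization.mk k x hx, by rw [segre_mk]; rfl⟩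
    · rintro ⟨p, hp⟩
      rw [← mk_rep p, segre_mk, mk_eq_mk_iff'] at hp
      obtain ⟨a, rfl⟩ := hp
      exact ⟨a • p.rep, by simp⟩

lemma exists_segV_of_projLin_subset {W : Submodule k (Fin 6 → k)} (hsub : projLin W ⊆ SegreX k)
    {v : Fin 6 → k} (hv : v ∈ W) : ∃ x y, v = segV k x y := by
  by_cases hv0 : v = 0
  · exact ⟨0, 0, by simp [hv0, ← segL_apply]⟩
  obtain ⟨p, q, hpq⟩ := hsub ((mem_projLin_mk hv0).2 hv)
  rw [segre, mk_eq_mk_iff'] at hpq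
  obtain ⟨a, rfl⟩ := hpq
  exact ⟨a • p.rep, q.rep, by simp [← segL_apply]⟩

/-- `segV x y` is the `3 × 2` matrix `x yᵀ` flattened row by row; `idx6 i j` is the position of
its entry `(i, j)`. -/
def idx6 (i : Fin 3) (j : Fin 2) : Fin 6 := ⟨2 * i + j, by omega⟩

lemma segV_idx6 (x : Fin 3 → k) (y : Fin 2 → k) (i : Fin 3) (j : Fin 2) :
    segV k x y (idx6 i j) = x i * y j := by
  have hi : (2 * i.1 + j.1) / 2 = i := by omega
  have hj : (2 * i.1 + j.1) % 2 = j := by omega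
  simp only [segV, idx6, hi, hj]

def segMinor (v : Fin 6 → k) (i i' : Fin 3) (j j' : Fin 2) : k :=
  v (idx6 i j) * v (idx6 i' j') - v (idx6 i j') * v (idx6 i' j)

lemma segMinor_segV (x : Fin 3 → k) (y : Fin 2 → k) (i i' : Fin 3) (j j' : Fin 2) :
    segMinor (segV k x y) i i' j j' = 0 := by
  simp only [segMinor, segV_idx6]; ring

lemma segMinor_segV_add_segV (x₀ x : Fin 3 → k) (y₀ y : Fin 2 → k) (i i' : Fin 3) (j j' : Fin 2) :
    segMinor (segV k x₀ y₀ + segV k x y) i i' j j' =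
      (x₀ i * x i' - x₀ i' * x i) * (y₀ j * y j' - y₀ j' * y j) := by
  simp only [segMinor, Pi.add_apply, segV_idx6]; ring

lemma cross_eq_or_cross_eq_of_segV_add_segV {x₀ x x' : Fin 3 → k} {y₀ y y' : Fin 2 → k}
    (h : segV k x₀ y₀ + segV k x y = segV k x' y') :
    (∀ i i', x₀ i * x i' = x₀ i' * x i) ∨ (∀ j j', y₀ j * y j' = y₀ j' * y j) := by
  by_contra! ⟨⟨i, i', hi⟩, ⟨j, j', hj⟩⟩
  have hminor := segMinor_segV_add_segV x₀ x y₀ y i i' j j'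
  rw [h, segMinor_segV] at hminor
  exact mul_ne_zero (sub_ne_zero.2 hi) (sub_ne_zero.2 hj) hminor.symm

lemma le_range_segL_flip_or_le_range_segL {W : Submodule k (Fin 6 → k)}
    (hsub : projLin W ⊆ SegreX k) {x₀ : Fin 3 → k} {y₀ : Fin 2 → k} (hx₀ : x₀ ≠ 0) (hy₀ : y₀ ≠ 0)
    (h₀ : segV k x₀ y₀ ∈ W) :
    W ≤ LinearMap.range (segL.flip y₀) ∨ W ≤ LinearMap.range (segL x₀) := by
  rw [← AddSubgroupClass.subset_union]
  intro w hw
  obtain ⟨x, y, rfl⟩ := exists_segV_of_projLin_subset hsub hw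
  obtain ⟨x', y', h⟩ := exists_segV_of_projLin_subset hsub (W.add_mem h₀ hw)
  rcases cross_eq_or_cross_eq_of_segV_add_segV h with hx | hy
  · obtain ⟨c, rfl⟩ := exists_eq_smul_of_mul_eq_mul hx₀ hx
    exact Or.inr ⟨c • y, by simp [← segL_apply]⟩
  · obtain ⟨c, rfl⟩ := exists_eq_smul_of_mul_eq_mul hy₀ hy
    exact Or.inl ⟨c • x, by simp [← segL_apply]⟩

lemma finrank_range_segL_flip {y : Fin 2 → k} (hy : y ≠ 0) :
    Module.finrank k (LinearMap.range (segL.flip y)) = 3 := by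
  have hinj : Function.Injective (segL.flip y) := by
    rw [← LinearMap.ker_eq_bot, Submodule.eq_bot_iff]
    intro x hx
    by_contra hx0
    exact segV_ne_zero k hx0 hy hx
  simp [LinearMap.finrank_range_of_inj hinj]

lemma finrank_range_segL_le (x : Fin 3 → k) : Module.finrank k (LinearMap.range (segL x)) ≤ 2 := by
  simpa using LinearMap.finrank_range_le (segL x)

end Segre

theorem statement0_general (k : Type*) [Field k]
    (W : Submodule k (Fin 6 → k)) (hW : Module.finrank k W = 3)
    (hsub : projLin W ⊆ SegreX k) :
    ∃ a : Pk k 2, projLin W = F1set k a := by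
  obtain ⟨v₀, hv₀, hv₀0⟩ := W.exists_mem_ne_zero_of_ne_bot (by rintro rfl; simp at hW)
  obtain ⟨x₀, y₀, rfl⟩ := exists_segV_of_projLin_subset hsub hv₀
  have hx₀ : x₀ ≠ 0 := by rintro rfl; simp [← segL_apply] at hv₀0
  have hy₀ : y₀ ≠ 0 := by rintro rfl; simp [← segL_apply] at hv₀0
  refine ⟨Projectivization.mk k y₀ hy₀, ?_⟩
  rw [← projLin_range_segL_flip hy₀]
  congr 1
  rcases le_range_segL_flip_or_le_range_segL hsub hx₀ hy₀ hv₀ with h | h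
  · exact Submodule.eq_of_le_of_finrank_eq h (by rw [hW, finrank_range_segL_flip hy₀])
  · have := (Submodule.finrank_mono h).trans (finrank_range_segL_le x₀)
    omega

/-- the only planes (2-dimensional linear subspaces, i.e. projectivizations of
3-dimensional vector subspaces) of ℙ⁵ contained in the Segre threefold
X = s(ℙ² × ℙ¹) are the fibers s(ℙ² × {a}), a ∈ ℙ¹. -/
theorem statement0 (k : Type*) [Field k] [IsAlgClosed k]
    (W : Submodule k (Fin 6 → k)) (hW : Module.finrank k W = 3)
    (hsub : projLin W ⊆ SegreX k) :
    ∃ a : Pk k 2, projLin W = F1set k a :=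
  statement0_general k W hW hsub
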